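/- arXiv:2309.03159 — 4 statements merged into one kernel-verified Lean document; each statement's English description precedes it below -/
import Mathlib

section
/- Let (V, ⟨·,·⟩) be an n-dimensional real inner product space, n ≥ 2, Ω : V → V an antisymmetric linear operator, and v ∈ V a unit vector. Extend v to an orthonormal basis {v, e₂, ..., eₙ} and define A(v,w) = (3/4)⟨w,Ω v⟩ Ω v − (1/4)Ω² w − (1/4)⟨Ω w, Ω v⟩ v for w orthogonal to v. Then the trace of w ↦ A(v,w) on the orthogonal complement of v equals Σᵢ₌₂ⁿ ⟨eᵢ, Ω v⟩² + (1/4) Σᵢ,ⱼ₌₂ⁿ ⟨Ω eᵢ, eⱼ⟩². -/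
open scoped RealInnerProductSpace

theorem stmt_2 {V : Type*} [NormedAddCommGroup V] [InnerProductSpace ℝ V]
    [FiniteDimensional ℝ V] (n : ℕ) (hn : 2 ≤ n) (hdim : Module.finrank ℝ V = n)
    (Ω : V →ₗ[ℝ] V) (hΩ : ∀ x y : V, ⟪Ω x, y⟫ = -⟪x, Ω y⟫)
    (b : OrthonormalBasis (Fin n) ℝ V) (i0 : Fin n) (hi0 : (i0 : ℕ) = 0)
    (v : V) (hv : v = b i0) :
    ∑ i ∈ Finset.univ.filter (fun i => i ≠ i0),
        ⟪((3/4 : ℝ) * ⟪b i, Ω v⟫) • Ω v - (1/4 : ℝ) • Ω (Ω (b i))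
          - ((1/4 : ℝ) * ⟪Ω (b i), Ω v⟫) • v, b i⟫
      = (∑ i ∈ Finset.univ.filter (fun i => i ≠ i0), ⟪b i, Ω v⟫ ^ 2)
        + (1/4 : ℝ) * ∑ i ∈ Finset.univ.filter (fun i => i ≠ i0),
            ∑ j ∈ Finset.univ.filter (fun j => j ≠ i0), ⟪Ω (b i), b j⟫ ^ 2 := by
  rw [Finset.mul_sum, ← Finset.sum_add_distrib]
  apply Finset.sum_congr rfl
  intro i hi
  simp only [Finset.mem_filter, Finset.mem_univ, true_and] at hi
  have hvi : ⟪v, b i⟫ = 0 := by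
    rw [hv]; exact b.orthonormal.2 (Ne.symm hi)
  have hΩΩ : ⟪Ω (Ω (b i)), b i⟫ = -⟪Ω (b i), Ω (b i)⟫ := hΩ _ _
  have hpars : ⟪Ω (b i), Ω (b i)⟫ = ∑ j, ⟪Ω (b i), b j⟫ ^ 2 := by
    rw [← b.sum_inner_mul_inner (Ω (b i)) (Ω (b i))]
    apply Finset.sum_congr rfl
    intro j _
    rw [real_inner_comm (Ω (b i)) (b j), sq]
  have hsplit : ∑ j, ⟪Ω (b i), b j⟫ ^ 2
      = ⟪Ω (b i), b i0⟫ ^ 2 + ∑ j ∈ Finset.univ.filter (fun j => j ≠ i0), ⟪Ω (b i), b j⟫ ^ 2 := by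
    rw [Finset.filter_ne', ← Finset.add_sum_erase _ _ (Finset.mem_univ i0)]
  have hiv : ⟪Ω (b i), b i0⟫ = -⟪b i, Ω v⟫ := by rw [hΩ, hv]
  simp only [inner_sub_left, real_inner_smul_left, hvi, hΩΩ, hpars, hsplit, hiv]
  rw [real_inner_comm (Ω v) (b i)]; ring
end

section
/- Let V be a finite-dimensional real inner product space, Ω : V → V antisymmetric, and v a unit vector. With A(v,w) = (3/4)⟨w,Ω v⟩ Ω v − (1/4)Ω² w − (1/4)⟨Ω w, Ω v⟩ v, the trace of A(v,·) over the orthogonal complement of v is nonnegative, and it is zero if and only if Ω = 0. -/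
open scoped RealInnerProductSpace

theorem stmt_3 {V : Type*} [NormedAddCommGroup V] [InnerProductSpace ℝ V]
    [FiniteDimensional ℝ V] (n : ℕ) (hn : 2 ≤ n) (hdim : Module.finrank ℝ V = n)
    (Ω : V →ₗ[ℝ] V) (hΩ : ∀ x y : V, ⟪Ω x, y⟫ = -⟪x, Ω y⟫)
    (b : OrthonormalBasis (Fin n) ℝ V) (i0 : Fin n) (hi0 : (i0 : ℕ) = 0)
    (v : V) (hv : v = b i0) :
    0 ≤ ∑ i ∈ Finset.univ.filter (fun i => i ≠ i0),
          ⟪((3/4 : ℝ) * ⟪b i, Ω v⟫) • Ω v - (1/4 : ℝ) • Ω (Ω (b i))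
            - ((1/4 : ℝ) * ⟪Ω (b i), Ω v⟫) • v, b i⟫ ∧
      ((∑ i ∈ Finset.univ.filter (fun i => i ≠ i0),
          ⟪((3/4 : ℝ) * ⟪b i, Ω v⟫) • Ω v - (1/4 : ℝ) • Ω (Ω (b i))
            - ((1/4 : ℝ) * ⟪Ω (b i), Ω v⟫) • v, b i⟫) = 0 ↔ Ω = 0) := by
  have hterm : ∀ i ∈ Finset.univ.filter (fun i => i ≠ i0),
      ⟪((3/4 : ℝ) * ⟪b i, Ω v⟫) • Ω v - (1/4 : ℝ) • Ω (Ω (b i))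
        - ((1/4 : ℝ) * ⟪Ω (b i), Ω v⟫) • v, b i⟫
      = (3/4 : ℝ) * ⟪b i, Ω v⟫ ^ 2 + (1/4 : ℝ) * ⟪Ω (b i), Ω (b i)⟫ := by
    intro i hi
    simp only [Finset.mem_filter, Finset.mem_univ, true_and] at hi
    have hvbi : ⟪v, b i⟫ = 0 := by
      rw [hv]; exact b.orthonormal.2 (Ne.symm hi)
    have h1 : ⟪Ω (Ω (b i)), b i⟫ = -⟪Ω (b i), Ω (b i)⟫ := hΩ _ _
    rw [inner_sub_left, inner_sub_left, inner_smul_left, inner_smul_left,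
      inner_smul_left, hvbi, real_inner_comm (Ω v) (b i), h1]
    simp only [starRingEnd_apply, star_trivial]
    ring
  have hnonneg : ∀ i ∈ Finset.univ.filter (fun i => i ≠ i0),
      (0 : ℝ) ≤ ⟪((3/4 : ℝ) * ⟪b i, Ω v⟫) • Ω v - (1/4 : ℝ) • Ω (Ω (b i))
        - ((1/4 : ℝ) * ⟪Ω (b i), Ω v⟫) • v, b i⟫ := by
    intro i hi
    rw [hterm i hi]
    have := real_inner_self_nonneg (x := Ω (b i))
    positivity
  refine ⟨Finset.sum_nonneg hnonneg, ?_⟩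
  rw [Finset.sum_eq_zero_iff_of_nonneg hnonneg]
  constructor
  · intro h
    have hΩb : ∀ i, i ≠ i0 → Ω (b i) = 0 ∧ ⟪b i, Ω v⟫ = 0 := by
      intro i hi
      have hi' : i ∈ Finset.univ.filter (fun i => i ≠ i0) := by
        simp [hi]
      have h0 := h i hi'
      rw [hterm i hi'] at h0
      have h2 := sq_nonneg (⟪b i, Ω v⟫ : ℝ)
      have h3 := real_inner_self_nonneg (x := Ω (b i))
      constructor
      · rw [← @inner_self_eq_zero ℝ]; nlinarith
      · nlinarith
    have hΩv : Ω v = 0 := by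
      have : ∀ i, ⟪b i, Ω v⟫ = 0 := by
        intro i
        by_cases hi : i = i0
        · subst hi
          rw [← hv]
          have := hΩ v v
          rw [real_inner_comm] at this
          linarith
        · exact (hΩb i hi).2
      apply b.repr.injective
      ext i
      simp [b.repr_apply_apply, this i]
    apply LinearMap.ext
    have hbasis : ∀ i, Ω (b i) = 0 := by
      intro i
      by_cases hi : i = i0
      · subst hi; rw [← hv]; exact hΩv
      · exact (hΩb i hi).1
    intro x
    have := b.toBasis.sum_repr x
    rw [← this]
    simp [map_sum, hbasis]
  · intro h i hi
    rw [hterm i hi, h]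
    simp
end

section
/- Let H be a real Hilbert space with a splitting H = H₀ ⊕ E where E is finite-dimensional, and let S : B → ℝ be a C² function on an open product of balls B = B_r^{H₀} × B_r^{E} such that its second derivative satisfies Hess_{(y_h,y_e)} S (0, ζ) ≤ −2D|ζ|² for every (y_h, y_e) ∈ B, ζ ∈ E, and some constant D > 0, and such that the partial derivative of S in the E-direction vanishes on B_r^{H₀} × {0}. Then for every (y_h, y_e) ∈ B with y_e ≠ 0 and every 0 < λ < r − |y_e|, one has S(y_h, y_e + λ y_e/|y_e|) ≤ S(y_h, y_e) − D λ². -/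
theorem stmt_16 {H₀ E : Type*}
    [NormedAddCommGroup H₀] [InnerProductSpace ℝ H₀] [CompleteSpace H₀]
    [NormedAddCommGroup E] [InnerProductSpace ℝ E] [FiniteDimensional ℝ E]
    (r D : ℝ) (hr : 0 < r) (hD : 0 < D)
    (S : H₀ × E → ℝ)
    (hS : ContDiffOn ℝ 2 S ((Metric.ball (0:H₀) r) ×ˢ (Metric.ball (0:E) r)))
    (hHess : ∀ p ∈ (Metric.ball (0:H₀) r) ×ˢ (Metric.ball (0:E) r), ∀ ζ : E,
      fderiv ℝ (fun q => fderiv ℝ S q ((0:H₀), ζ)) p ((0:H₀), ζ) ≤ -2 * D * ‖ζ‖ ^ 2)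
    (hcrit : ∀ yh ∈ Metric.ball (0:H₀) r, ∀ ζ : E,
      fderiv ℝ S (yh, (0:E)) ((0:H₀), ζ) = 0) :
    ∀ yh ∈ Metric.ball (0:H₀) r, ∀ ye ∈ Metric.ball (0:E) r, ye ≠ 0 →
      ∀ l : ℝ, 0 < l → l < r - ‖ye‖ →
        S (yh, ye + (l * ‖ye‖⁻¹) • ye) ≤ S (yh, ye) - D * l ^ 2 := by
  intro yh hyh ye hye hne l hl hlr
  have hnorm : (0:ℝ) < ‖ye‖ := norm_pos_iff.mpr hne
  set u : E := ‖ye‖⁻¹ • ye with hu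
  have hun : ‖u‖ = 1 := by
    rw [hu, norm_smul, Real.norm_eq_abs, abs_of_pos (inv_pos.mpr hnorm),
      inv_mul_cancel₀ hnorm.ne']
  set B := (Metric.ball (0:H₀) r) ×ˢ (Metric.ball (0:E) r) with hB
  have hBopen : IsOpen B := Metric.isOpen_ball.prod Metric.isOpen_ball
  have hmem : ∀ t : ℝ, |t| < r → (yh, t • u) ∈ B := by
    intro t ht
    refine ⟨hyh, ?_⟩
    rw [Metric.mem_ball, dist_zero_right, norm_smul, hun, mul_one, Real.norm_eq_abs]
    exact ht
  -- differentiability of S and of its derivative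
  have hSdiff : DifferentiableOn ℝ S B := hS.differentiableOn (by norm_num)
  have hfd : ContDiffOn ℝ 1 (fderiv ℝ S) B := hS.fderiv_of_isOpen hBopen (by norm_num)
  have hfdd : DifferentiableOn ℝ (fderiv ℝ S) B := hfd.differentiableOn (by norm_num)
  set f : ℝ → ℝ := fun t => S (yh, t • u) with hf
  set g : ℝ → ℝ := fun t => fderiv ℝ S (yh, t • u) ((0:H₀), u) with hg
  have hγ : ∀ t : ℝ, HasDerivAt (fun s : ℝ => ((yh, s • u) : H₀ × E)) ((0:H₀), u) t := by
    intro t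
    exact (hasDerivAt_const t yh).prodMk (by simpa using (hasDerivAt_id t).smul_const u)
  have hfD : ∀ t : ℝ, |t| < r → HasDerivAt f (g t) t := by
    intro t ht
    have hd : DifferentiableAt ℝ S (yh, t • u) :=
      hSdiff.differentiableAt (hBopen.mem_nhds (hmem t ht))
    exact hd.hasFDerivAt.comp_hasDerivAt t (hγ t)
  have hgD : ∀ t : ℝ, |t| < r →
      HasDerivAt g (fderiv ℝ (fun q => fderiv ℝ S q ((0:H₀), u)) (yh, t • u) ((0:H₀), u)) t := by
    intro t ht
    have hd : DifferentiableAt ℝ (fderiv ℝ S) (yh, t • u) :=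
      hfdd.differentiableAt (hBopen.mem_nhds (hmem t ht))
    have hd2 : DifferentiableAt ℝ (fun q => fderiv ℝ S q ((0:H₀), u)) (yh, t • u) :=
      hd.clm_apply (differentiableAt_const _)
    exact hd2.hasFDerivAt.comp_hasDerivAt t (hγ t)
  have hgD' : ∀ t : ℝ, |t| < r → deriv g t ≤ -2 * D := by
    intro t ht
    rw [(hgD t ht).deriv]
    have := hHess (yh, t • u) (hmem t ht) u
    rwa [hun, one_pow, mul_one] at this
  set c : ℝ := ‖ye‖ + l with hc
  have hcr : c < r := by linarith
  have hc0 : 0 < c := by linarith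
  have habs : ∀ t ∈ Set.Icc (0:ℝ) c, |t| < r := by
    intro t ht
    rw [abs_lt]; constructor <;> [linarith [ht.1]; linarith [ht.2]]
  -- φ = g + 2Dt is antitone on [0,c]
  have hφ : AntitoneOn (fun t => g t + 2 * D * t) (Set.Icc 0 c) := by
    apply antitoneOn_of_deriv_nonpos (convex_Icc 0 c)
    · intro t ht
      exact ((hgD t (habs t ht)).continuousAt.continuousWithinAt).add
        ((by fun_prop : Continuous fun t : ℝ => 2 * D * t).continuousWithinAt)
    · intro t ht
      rw [interior_Icc] at ht
      exact ((hgD t (habs t ⟨le_of_lt ht.1, le_of_lt ht.2⟩)).differentiableAt.add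
        (by fun_prop)).differentiableWithinAt
    · intro t ht
      rw [interior_Icc] at ht
      have habs' : |t| < r := habs t ⟨le_of_lt ht.1, le_of_lt ht.2⟩
      rw [deriv_fun_add (hgD t habs').differentiableAt (by fun_prop), deriv_const_mul _ (by fun_prop)]
      simp only [deriv_id'', mul_one]
      have := hgD' t habs'
      linarith
  have hg0 : g 0 = 0 := by
    have := hcrit yh hyh u
    simpa [hg] using this
  have hgle : ∀ t ∈ Set.Icc (0:ℝ) c, g t + 2 * D * t ≤ 0 := by
    intro t ht
    have := hφ (Set.left_mem_Icc.mpr hc0.le) ht ht.1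
    simpa [hg0] using this
  -- ψ = f + D t² is antitone on [0,c]
  have hψ : AntitoneOn (fun t => f t + D * t ^ 2) (Set.Icc 0 c) := by
    apply antitoneOn_of_deriv_nonpos (convex_Icc 0 c)
    · intro t ht
      exact ((hfD t (habs t ht)).continuousAt.continuousWithinAt).add
        ((by fun_prop : Continuous fun t : ℝ => D * t ^ 2).continuousWithinAt)
    · intro t ht
      rw [interior_Icc] at ht
      exact ((hfD t (habs t ⟨le_of_lt ht.1, le_of_lt ht.2⟩)).differentiableAt.add
        (by fun_prop)).differentiableWithinAt
    · intro t ht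
      rw [interior_Icc] at ht
      have htmem : t ∈ Set.Icc (0:ℝ) c := ⟨le_of_lt ht.1, le_of_lt ht.2⟩
      have habs' : |t| < r := habs t htmem
      rw [deriv_fun_add (hfD t habs').differentiableAt (by fun_prop), (hfD t habs').deriv]
      have hderiv2 : deriv (fun t : ℝ => D * t ^ 2) t = 2 * D * t := by
        rw [deriv_const_mul _ (by fun_prop)]
        simp [deriv_pow]; ring
      rw [hderiv2]
      exact hgle t htmem
  have key := hψ (Set.mem_Icc.mpr ⟨hnorm.le, by linarith⟩)
    (Set.mem_Icc.mpr ⟨hc0.le, le_rfl⟩) (by linarith)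
  -- rewrite the goal in terms of f
  have hye_eq : (‖ye‖ : ℝ) • u = ye := smul_inv_smul₀ hnorm.ne' ye
  have hc_eq : c • u = ye + (l * ‖ye‖⁻¹) • ye := by
    rw [hu, smul_smul, hc, add_mul, mul_comm ‖ye‖ ‖ye‖⁻¹, inv_mul_cancel₀ hnorm.ne',
      add_smul, one_smul]
  have key' : f c + D * c ^ 2 ≤ f ‖ye‖ + D * ‖ye‖ ^ 2 := key
  have h1 : f c ≤ f ‖ye‖ + D * ‖ye‖ ^ 2 - D * c ^ 2 := by linarith
  have hfc : f c = S (yh, ye + (l * ‖ye‖⁻¹) • ye) := by rw [hf]; simp only; rw [hc_eq]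
  have hfy : f ‖ye‖ = S (yh, ye) := by rw [hf]; simp only; rw [hye_eq]
  rw [← hfc, ← hfy]
  have hexp : D * ‖ye‖ ^ 2 - D * c ^ 2 = -D * l ^ 2 - 2 * D * ‖ye‖ * l := by
    rw [hc]; ring
  nlinarith [mul_pos hnorm hl, mul_pos (mul_pos hD hnorm) hl]
end

section
/- Let Ω : V → V be an antisymmetric linear operator on a real inner product space V such that Ω w ≠ 0 for all nonzero w (i.e., Ω is invertible). Then for all orthonormal pairs v, w the quantity (3/4)⟨w, Ω v⟩² + (1/4)|Ω w|² is bounded below by a positive constant on the compact set of orthonormal pairs; consequently for the magnetic sectional curvature Sec_k^Ω(v,w) = 2k Sec(v,w) − √(2k)⟨(∇_w Ω)(v), w⟩ + (3/4)⟨w,Ω v⟩² + (1/4)|Ω w|², there exists k₀ > 0 such that Sec_k^Ω > 0 on the unit-orthonormal bundle for all k ∈ (0, k₀), provided Sec and ∇Ω are bounded (e.g., M closed). -/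
open scoped RealInnerProductSpace

/- `V` is the (typical) tangent space of the closed manifold `M`; `Ω` is the pointwise
invertible Lorentz operator of a symplectic magnetic form; `Sec` and `N` model the
sectional curvature and the `⟨(∇_w Ω)(v), w⟩` term, which are bounded since `M` is
closed. Conclusion: the `A^Ω` term has a positive lower bound on orthonormal pairs,
and consequently `Sec_k^Ω > 0` for all sufficiently small `k > 0`. -/
theorem stmt_17 {V : Type*} [NormedAddCommGroup V] [InnerProductSpace ℝ V]
    [FiniteDimensional ℝ V] (Ω : V →ₗ[ℝ] V)
    (hΩ : ∀ x y : V, ⟪Ω x, y⟫ = -⟪x, Ω y⟫)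
    (hinv : ∀ w : V, w ≠ 0 → Ω w ≠ 0)
    (Sec N : V → V → ℝ) (CS CN : ℝ)
    (hS : ∀ v w : V, |Sec v w| ≤ CS) (hN : ∀ v w : V, |N v w| ≤ CN) :
    (∃ ε > 0, ∀ v w : V, ‖v‖ = 1 → ‖w‖ = 1 → ⟪v, w⟫ = 0 →
        ε ≤ (3/4 : ℝ) * ⟪w, Ω v⟫ ^ 2 + (1/4 : ℝ) * ‖Ω w‖ ^ 2) ∧
      ∃ k₀ > 0, ∀ k ∈ Set.Ioo (0:ℝ) k₀, ∀ v w : V, ‖v‖ = 1 → ‖w‖ = 1 → ⟪v, w⟫ = 0 →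
        0 < 2 * k * Sec v w - Real.sqrt (2 * k) * N v w
            + (3/4 : ℝ) * ⟪w, Ω v⟫ ^ 2 + (1/4 : ℝ) * ‖Ω w‖ ^ 2 := by
  have hΩc : Continuous fun w : V => ‖Ω w‖ :=
    (LinearMap.continuous_of_finiteDimensional Ω).norm
  have key : ∃ ε > 0, ∀ w : V, ‖w‖ = 1 → ε ≤ (1/4 : ℝ) * ‖Ω w‖ ^ 2 := by
    by_cases hne : (Metric.sphere (0:V) 1).Nonempty
    · obtain ⟨w₀, hw₀, hmin⟩ :=
        (isCompact_sphere (0:V) 1).exists_isMinOn hne hΩc.continuousOn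
      have hw₀1 : ‖w₀‖ = 1 := by simpa using hw₀
      have hpos : 0 < ‖Ω w₀‖ := by
        have hne0 : w₀ ≠ 0 := by intro h; rw [h] at hw₀1; simp at hw₀1
        exact norm_pos_iff.mpr (hinv _ hne0)
      refine ⟨(1/4) * ‖Ω w₀‖ ^ 2, by positivity, fun w hw => ?_⟩
      have hle : ‖Ω w₀‖ ≤ ‖Ω w‖ := hmin (by simpa [dist_zero_right] using hw)
      nlinarith [norm_nonneg (Ω w₀)]
    · exact ⟨1, one_pos, fun w hw =>
        absurd ⟨w, by simpa [dist_zero_right] using hw⟩ hne⟩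
  obtain ⟨ε, hε, hεle⟩ := key
  have hA : ∀ v w : V, ‖w‖ = 1 →
      ε ≤ (3/4 : ℝ) * ⟪w, Ω v⟫ ^ 2 + (1/4 : ℝ) * ‖Ω w‖ ^ 2 := by
    intro v w hw
    nlinarith [hεle w hw, sq_nonneg (⟪w, Ω v⟫ : ℝ)]
  refine ⟨⟨ε, hε, fun v w _ hw _ => hA v w hw⟩, ?_⟩
  have hCS : 0 ≤ CS := le_trans (abs_nonneg _) (hS 0 0)
  have hCN : 0 ≤ CN := le_trans (abs_nonneg _) (hN 0 0)
  refine ⟨min (ε / (4*(CS+1))) ((ε/(4*(CN+1)))^2/2),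
    lt_min (by positivity) (by positivity), ?_⟩
  intro k hk v w hv hw hvw
  have hk0 : 0 < k := hk.1
  have hk1 : k < ε / (4*(CS+1)) := lt_of_lt_of_le hk.2 (min_le_left _ _)
  have hk2 : k < (ε/(4*(CN+1)))^2/2 := lt_of_lt_of_le hk.2 (min_le_right _ _)
  have hk1' : k * (4*(CS+1)) < ε := (lt_div_iff₀ (by positivity)).mp hk1
  set s := Real.sqrt (2*k) with hs
  have hs0 : 0 ≤ s := Real.sqrt_nonneg _
  have hsq : s ≤ ε/(4*(CN+1)) := by
    have h1 : s ≤ Real.sqrt ((ε/(4*(CN+1)))^2) :=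
      Real.sqrt_le_sqrt (by nlinarith)
    rwa [Real.sqrt_sq (by positivity)] at h1
  have hsq' : s * (4*(CN+1)) ≤ ε := (le_div_iff₀ (by positivity)).mp hsq
  have hSle := abs_le.mp (hS v w)
  have hNle := abs_le.mp (hN v w)
  have hAle := hA v w hw
  nlinarith [mul_le_mul_of_nonneg_left hSle.1 (by linarith : (0:ℝ) ≤ 2*k),
    mul_le_mul_of_nonneg_left hNle.2 hs0,
    mul_nonneg hs0 hCN, mul_nonneg hk0.le hCS]
end
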